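/- arXiv:1709.03333 — 5 statements merged into one kernel-verified Lean document; each statement's English description precedes it below -/
import Mathlib

section
/- Let C be a norm-closed convex bounded subset of L¹[0,1] and let (x_n) be a sequence in C that converges in measure to some x ∈ L¹[0,1]. Then the distance from x to C satisfies dist(x, C) ≤ diam(C)/2, where diam(C) = sup{‖u − v‖₁ : u, v ∈ C}. Consequently the Hausdorff distance between C and its closure in the topology of convergence in measure is at most diam(C)/2. -/
open MeasureTheory Filter Metric Topology

/-- Lebesgue measure on `[0,1]`. -/
noncomputable def μ01 : Measure ℝ := volume.restrict (Set.Icc 0 1)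

/-!
Pass to a subsequence `z n` of `x n` converging to `x₀` almost everywhere and fix `c ∈ C`.
By dominated convergence `‖z n - c‖ - ‖z n - x₀‖ → ‖x₀ - c‖`. Each term on the left is at most
`diam C - dist(x₀, C)`, while `‖x₀ - c‖ ≥ dist(x₀, C)`; hence `2 dist(x₀, C) ≤ diam C`.
The Hausdorff bound follows because constant sequences put `C` inside its closure in measure.
-/

theorem Metric.infDist_le_half_diam_of_tendsto_dist_sub_dist {α ι : Type*}
    [PseudoMetricSpace α] {C : Set α} (hC : Bornology.IsBounded C) {l : Filter ι} [l.NeBot]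
    {z : ι → α} (hz : ∀ i, z i ∈ C) {c : α} (hc : c ∈ C) {y : α}
    (hlim : Tendsto (fun i => dist (z i) c - dist (z i) y) l (𝓝 (dist y c))) :
    infDist y C ≤ diam C / 2 := by
  have hbound : dist y c ≤ diam C - infDist y C :=
    le_of_tendsto hlim <| Eventually.of_forall fun i => by
      have hzc := dist_le_diam_of_mem hC (hz i) hc
      have hzy := infDist_le_dist_of_mem (x := y) (hz i)
      rw [dist_comm] at hzy
      linarith
  have hyc := infDist_le_dist_of_mem (x := y) hc
  linarith

namespace MeasureTheory

theorem Lp.tendstoInMeasure_const {α ι E : Type*} {m : MeasurableSpace α} {μ : Measure α}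
    [NormedAddCommGroup E] {p : ENNReal} [Fact (1 ≤ p)] {l : Filter ι} (f : Lp E p μ) :
    TendstoInMeasure μ (fun _ : ι => (f : α → E)) l f :=
  tendstoInMeasure_of_tendsto_Lp tendsto_const_nhds

namespace L1

variable {α H : Type*} {m : MeasurableSpace α} {μ : Measure α} [NormedAddCommGroup H]

theorem integrable_dist (f g : α →₁[μ] H) : Integrable (fun a => dist (f a) (g a)) μ := by
  refine ((integrable_coeFn f).sub (integrable_coeFn g)).norm.congr ?_
  filter_upwards with a using (dist_eq_norm _ _).symm

theorem dist_sub_dist_eq_integral (f g h : α →₁[μ] H) :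
    dist f h - dist f g = ∫ a, (dist (f a) (h a) - dist (f a) (g a)) ∂μ := by
  rw [dist_eq_integral_dist, dist_eq_integral_dist,
    ← MeasureTheory.integral_sub (integrable_dist f h) (integrable_dist f g)]

/-- Dominated convergence, with `dist (g a) (h a)` bounding the integrand by the triangle
inequality. -/
theorem tendsto_dist_sub_dist_of_tendsto_ae {f : ℕ → α →₁[μ] H} {g : α →₁[μ] H}
    (hfg : ∀ᵐ a ∂μ, Tendsto (fun n => f n a) atTop (𝓝 (g a))) (h : α →₁[μ] H) :
    Tendsto (fun n => dist (f n) h - dist (f n) g) atTop (𝓝 (dist g h)) := by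
  simp only [dist_sub_dist_eq_integral, dist_eq_integral_dist g h]
  refine tendsto_integral_of_dominated_convergence (fun a => dist (g a) (h a))
    (fun n => ((integrable_dist _ h).sub (integrable_dist _ g)).aestronglyMeasurable)
    (integrable_dist g h) (fun n => Eventually.of_forall fun a => ?_) ?_
  · rw [Real.norm_eq_abs, dist_comm (g a), dist_comm (f n a), dist_comm (f n a)]
    exact abs_dist_sub_le _ _ _
  · filter_upwards [hfg] with a ha
    simpa using (ha.dist (tendsto_const_nhds (x := h a))).sub
      (ha.dist (tendsto_const_nhds (x := g a)))

theorem infDist_le_half_diam_of_tendstoInMeasure {C : Set (α →₁[μ] H)}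
    (hC : Bornology.IsBounded C) {z : ℕ → α →₁[μ] H} (hz : ∀ n, z n ∈ C) {y : α →₁[μ] H}
    (hlim : TendstoInMeasure μ (fun n => (z n : α → H)) atTop y) :
    infDist y C ≤ diam C / 2 := by
  obtain ⟨ns, -, hae⟩ := hlim.exists_seq_tendsto_ae
  exact infDist_le_half_diam_of_tendsto_dist_sub_dist hC (fun n => hz (ns n)) (hz 0)
    (tendsto_dist_sub_dist_of_tendsto_ae hae (z 0))

end L1

end MeasureTheory

theorem dist_le_half_diam_of_tendstoInMeasure_general
    (C : Set (Lp ℝ 1 μ01))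
    (hbdd : Bornology.IsBounded C)
    (x : ℕ → Lp ℝ 1 μ01) (hxC : ∀ n, x n ∈ C) (x₀ : Lp ℝ 1 μ01)
    (hlim : TendstoInMeasure μ01 (fun n => (x n : ℝ → ℝ)) atTop (x₀ : ℝ → ℝ)) :
    Metric.infDist x₀ C ≤ Metric.diam C / 2 ∧
      Metric.hausdorffDist C
        {y : Lp ℝ 1 μ01 | ∃ z : ℕ → Lp ℝ 1 μ01, (∀ n, z n ∈ C) ∧
          TendstoInMeasure μ01 (fun n => (z n : ℝ → ℝ)) atTop (y : ℝ → ℝ)} ≤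
      Metric.diam C / 2 := by
  refine ⟨L1.infDist_le_half_diam_of_tendstoInMeasure hbdd hxC hlim,
    hausdorffDist_le_of_infDist (by positivity) (fun c hc => ?_) ?_⟩
  · have hc_mem : c ∈ {y : Lp ℝ 1 μ01 | ∃ z : ℕ → Lp ℝ 1 μ01, (∀ n, z n ∈ C) ∧
        TendstoInMeasure μ01 (fun n => (z n : ℝ → ℝ)) atTop (y : ℝ → ℝ)} :=
      ⟨fun _ => c, fun _ => hc, Lp.tendstoInMeasure_const c⟩
    rw [infDist_zero_of_mem hc_mem]
    positivity
  · rintro y ⟨z, hz, hzlim⟩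
    exact L1.infDist_le_half_diam_of_tendstoInMeasure hbdd hz hzlim

/-- If `C` is a norm-closed convex bounded subset of `L¹[0,1]` and `(x n) ⊆ C` converges in
measure to `x₀`, then `dist(x₀, C) ≤ diam C / 2`; consequently the Hausdorff distance between
`C` and its closure in the topology of convergence in measure is at most `diam C / 2`. -/
theorem dist_le_half_diam_of_tendstoInMeasure
    (C : Set (Lp ℝ 1 μ01)) (hclosed : IsClosed C) (hconv : Convex ℝ C)
    (hbdd : Bornology.IsBounded C)
    (x : ℕ → Lp ℝ 1 μ01) (hxC : ∀ n, x n ∈ C) (x₀ : Lp ℝ 1 μ01)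
    (hlim : TendstoInMeasure μ01 (fun n => (x n : ℝ → ℝ)) atTop (x₀ : ℝ → ℝ)) :
    Metric.infDist x₀ C ≤ Metric.diam C / 2 ∧
      Metric.hausdorffDist C
        {y : Lp ℝ 1 μ01 | ∃ z : ℕ → Lp ℝ 1 μ01, (∀ n, z n ∈ C) ∧
          TendstoInMeasure μ01 (fun n => (z n : ℝ → ℝ)) atTop (y : ℝ → ℝ)} ≤
      Metric.diam C / 2 :=
  dist_le_half_diam_of_tendstoInMeasure_general C hbdd x hxC x₀ hlim
end

section
/- Let C be a norm-closed convex bounded subset of L¹[0,1] with diam(C) > 0, and suppose the Hausdorff distance between C and its closure in the topology of convergence in measure equals diam(C)/2 (equivalently, for every ε > 0 there is a point x that is the limit in measure of a sequence in C with dist(x, C) ≥ diam(C)/2 − ε). Then for every ε > 0 there exist a sequence (x_n) in C converging in measure to some x ∈ L¹[0,1] such that limsup_n ‖x_n − x‖₁ ≥ diam(C)/2 − ε and, for every c ∈ C, limsup_n ‖x_n − c‖₁ ≥ 2·limsup_n ‖x_n − x‖₁ − ε. In particular t(C) = 2, where t(C) is the infimum of all λ ≥ 0 such that for every sequence (x_n)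 ⊆ C converging in measure to some x ∈ L¹[0,1], inf_{c∈C} limsup_n ‖c − x_n‖₁ ≤ λ·limsup_n ‖x − x_n‖₁. -/
open MeasureTheory Filter Metric Topology

/-- The coefficient `t(C)`: the infimum of all `λ ≥ 0` such that for every sequence in `C`
converging in measure to some `x`, `inf_{c ∈ C} limsup_n ‖c - x_n‖ ≤ λ · limsup_n ‖x - x_n‖`. -/
noncomputable def tCoef (C : Set (Lp ℝ 1 μ01)) : ℝ :=
  sInf {l : ℝ | 0 ≤ l ∧ ∀ (x : ℕ → Lp ℝ 1 μ01) (x₀ : Lp ℝ 1 μ01),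
    (∀ n, x n ∈ C) →
    TendstoInMeasure μ01 (fun n => (x n : ℝ → ℝ)) atTop (x₀ : ℝ → ℝ) →
    sInf ((fun c => limsup (fun n => ‖c - x n‖) atTop) '' C) ≤
      l * limsup (fun n => ‖x₀ - x n‖) atTop}

/-!
Pass to a subsequence `x_k` of the measure-convergent sequence that converges a.e. to `x₀` and
along which `‖x_k - x₀‖ → L`. The Brezis–Lieb lemma in `L¹` then gives
`‖x_k - c‖ → ‖x₀ - c‖ + L` for every `c`. Since `x₀` lies at distance almost `diam C / 2` from `C`
while `‖x_k - c‖ ≤ diam C` for `c ∈ C`, both `L` and every `‖x₀ - c‖` are close to `diam C / 2`,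
so `lim ‖x_k - c‖ ≈ 2L` uniformly in `c ∈ C`: this forces `t(C) ≥ 2`. Conversely, centring at
the terms `x_m` of any sequence in `C` bounds its asymptotic radius by `‖x_m - x₀‖ + L` for every
`m`, hence by `2L`, so `2` is always an admissible coefficient.
-/

section AsymptoticRadius

variable {E : Type*} [SeminormedAddCommGroup E] {C : Set E} {x : ℕ → E}

noncomputable def asymptoticRadius (C : Set E) (x : ℕ → E) : ℝ :=
  sInf ((fun c => limsup (fun n => ‖c - x n‖) atTop) '' C)

theorem isBoundedUnder_norm_sub (hC : Bornology.IsBounded C) (hx : ∀ n, x n ∈ C) (y : E) :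
    IsBoundedUnder (· ≤ ·) atTop fun n => ‖y - x n‖ := by
  obtain ⟨R, hR⟩ := isBounded_iff_forall_norm_le.1 hC
  exact isBoundedUnder_of ⟨‖y‖ + R, fun n => (norm_sub_le _ _).trans (by grw [hR _ (hx n)])⟩

theorem asymptoticRadius_le_limsup (hC : Bornology.IsBounded C) (hx : ∀ n, x n ∈ C) {c : E}
    (hc : c ∈ C) : asymptoticRadius C x ≤ limsup (fun n => ‖c - x n‖) atTop :=
  csInf_le ⟨0, Set.forall_mem_image.2 fun c' _ => le_limsup_of_frequently_le
    (.of_forall fun _ => norm_nonneg _) (isBoundedUnder_norm_sub hC hx c')⟩ ⟨c, hc, rfl⟩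

theorem le_asymptoticRadius (hne : C.Nonempty) {a : ℝ}
    (h : ∀ c ∈ C, a ≤ limsup (fun n => ‖c - x n‖) atTop) : a ≤ asymptoticRadius C x :=
  le_csInf (hne.image _) (Set.forall_mem_image.2 h)

theorem asymptoticRadius_le_two_mul_limsup (hC : Bornology.IsBounded C) (hx : ∀ n, x n ∈ C)
    (x₀ : E) : asymptoticRadius C x ≤ 2 * limsup (fun n => ‖x₀ - x n‖) atTop := by
  set L := limsup (fun n => ‖x₀ - x n‖) atTop
  have hB := isBoundedUnder_norm_sub hC hx x₀
  have key : ∀ m, asymptoticRadius C x - L ≤ ‖x₀ - x m‖ := fun m => by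
    have : limsup (fun n => ‖x m - x n‖) atTop ≤ ‖x₀ - x m‖ + L :=
      calc limsup (fun n => ‖x m - x n‖) atTop
          ≤ limsup (fun n => ‖x₀ - x m‖ + ‖x₀ - x n‖) atTop :=
            limsup_le_limsup (.of_forall fun n => by
                simpa only [norm_sub_rev x₀ (x m)] using norm_sub_le_norm_sub_add_norm_sub _ x₀ _)
              (isCoboundedUnder_le_of_le _ fun _ => norm_nonneg _)
              (isBoundedUnder_le_add isBoundedUnder_const hB)
        _ = ‖x₀ - x m‖ + L :=
            limsup_const_add _ _ _ hB (isCoboundedUnder_le_of_le _ fun _ => norm_nonneg _)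
    linarith [asymptoticRadius_le_limsup hC hx (hx m)]
  linarith [le_limsup_of_frequently_le (.of_forall key) hB]

end AsymptoticRadius

theorem two_le_of_forall_two_mul_sub_le_mul {d l : ℝ} (hd : 0 < d)
    (h : ∀ ε > 0, ∃ L, d / 2 - ε ≤ L ∧ 2 * L - ε ≤ l * L) : 2 ≤ l := by
  by_contra! hl
  have h2l : 0 < 2 - l := by linarith
  obtain ⟨L, hdL, hLl⟩ := h (min (d / 4) ((2 - l) * d / 8)) (lt_min (by positivity) (by positivity))
  have hε₁ := min_le_left (d / 4) ((2 - l) * d / 8)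
  have hε₂ := min_le_right (d / 4) ((2 - l) * d / 8)
  nlinarith [mul_le_mul_of_nonneg_left (show d / 4 ≤ L by linarith) h2l.le, mul_pos h2l hd]

namespace MeasureTheory.L1

variable {α E : Type*} {m : MeasurableSpace α} {μ : Measure α} [NormedAddCommGroup E]

theorem norm_sub_eq_integral_norm_sub (f g : α →₁[μ] E) : ‖f - g‖ = ∫ a, ‖f a - g a‖ ∂μ := by
  simpa only [dist_eq_norm] using dist_eq_integral_dist f g

theorem integrable_norm_sub (f g : α →₁[μ] E) : Integrable (fun a => ‖f a - g a‖) μ :=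
  ((integrable_coeFn f).sub (integrable_coeFn g)).norm

/-- The Brezis–Lieb lemma in `L¹`. -/
theorem tendsto_norm_sub_sub_norm_sub {f : ℕ → α →₁[μ] E} {f₀ : α →₁[μ] E} (g : α →₁[μ] E)
    (hf : ∀ᵐ a ∂μ, Tendsto (fun n => f n a) atTop (𝓝 (f₀ a))) :
    Tendsto (fun n => ‖f n - g‖ - ‖f n - f₀‖) atTop (𝓝 ‖f₀ - g‖) := by
  have hsub : ∀ n, ‖f n - g‖ - ‖f n - f₀‖ = ∫ a, (‖f n a - g a‖ - ‖f n a - f₀ a‖) ∂μ := fun n => by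
    rw [norm_sub_eq_integral_norm_sub, norm_sub_eq_integral_norm_sub,
      MeasureTheory.integral_sub (integrable_norm_sub _ _) (integrable_norm_sub _ _)]
  simp only [hsub, norm_sub_eq_integral_norm_sub f₀ g]
  refine tendsto_integral_of_dominated_convergence (fun a => ‖f₀ a - g a‖)
    (fun n => ((integrable_norm_sub _ _).sub (integrable_norm_sub _ _)).aestronglyMeasurable)
    (integrable_norm_sub _ _) (fun n => .of_forall fun a => ?_) ?_
  · rw [Real.norm_eq_abs, ← sub_sub_sub_cancel_left (g a) (f₀ a) (f n a)]
    exact abs_norm_sub_norm_le _ _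
  · filter_upwards [hf] with a ha
    simpa using (ha.sub_const (g a)).norm.sub (ha.sub_const (f₀ a)).norm

theorem exists_subseq_tendsto_norm_sub {z : ℕ → α →₁[μ] E} {z₀ : α →₁[μ] E}
    (hz : TendstoInMeasure μ (fun n => (z n : α → E)) atTop z₀)
    (hbdd : Bornology.IsBounded (Set.range z)) :
    ∃ φ : ℕ → ℕ, StrictMono φ ∧ ∃ L, Tendsto (fun k => ‖z (φ k) - z₀‖) atTop (𝓝 L) ∧
      ∀ g, Tendsto (fun k => ‖z (φ k) - g‖) atTop (𝓝 (‖z₀ - g‖ + L)) := by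
  obtain ⟨ns, hns, hae⟩ := hz.exists_seq_tendsto_ae
  obtain ⟨R, hR⟩ := isBounded_iff_forall_norm_le.1 hbdd
  have hmem : ∀ k, ‖z (ns k) - z₀‖ ∈ Set.Icc 0 (R + ‖z₀‖) := fun k =>
    ⟨norm_nonneg _, (norm_sub_le _ _).trans (by grw [hR _ (Set.mem_range_self _)])⟩
  obtain ⟨L, -, ψ, hψ, hL⟩ := tendsto_subseq_of_bounded (isBounded_Icc _ _) hmem
  refine ⟨ns ∘ ψ, hns.comp hψ, L, hL, fun g => ?_⟩
  have hae' : ∀ᵐ a ∂μ, Tendsto (fun k => z (ns (ψ k)) a) atTop (𝓝 (z₀ a)) := by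
    filter_upwards [hae] with a ha using ha.comp hψ.tendsto_atTop
  simpa only [Function.comp_apply, sub_add_cancel] using
    (tendsto_norm_sub_sub_norm_sub g hae').add hL

theorem exists_subseq_almost_diametral {C : Set (α →₁[μ] E)} (hC : Bornology.IsBounded C)
    {z : ℕ → α →₁[μ] E} {x₀ : α →₁[μ] E} (hzC : ∀ n, z n ∈ C)
    (hz : TendstoInMeasure μ (fun n => (z n : α → E)) atTop x₀) :
    ∃ φ : ℕ → ℕ, StrictMono φ ∧ infDist x₀ C ≤ limsup (fun k => ‖z (φ k) - x₀‖) atTop ∧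
      ∀ c ∈ C, 2 * limsup (fun k => ‖z (φ k) - x₀‖) atTop - (diam C - 2 * infDist x₀ C) ≤
        limsup (fun k => ‖z (φ k) - c‖) atTop := by
  obtain ⟨φ, hφ, L, hL, hc⟩ :=
    exists_subseq_tendsto_norm_sub hz (hC.subset (Set.range_subset_iff.2 hzC))
  have hinfDist : ∀ c ∈ C, infDist x₀ C ≤ ‖x₀ - c‖ := fun c hc =>
    (infDist_le_dist_of_mem hc).trans_eq (dist_eq_norm _ _)
  have hdiam : ‖x₀ - z 0‖ + L ≤ diam C := le_of_tendsto' (hc (z 0)) fun k =>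
    (dist_eq_norm _ _).symm.trans_le (dist_le_diam_of_mem hC (hzC _) (hzC 0))
  refine ⟨φ, hφ, ?_, fun c hc' => ?_⟩
  · rw [hL.limsup_eq]
    exact ge_of_tendsto' hL fun k => (hinfDist _ (hzC _)).trans_eq (norm_sub_rev _ _)
  · rw [hL.limsup_eq, (hc c).limsup_eq]
    linarith [hinfDist c hc', hinfDist _ (hzC 0)]

end MeasureTheory.L1

theorem tCoef_eq_two_of_extremal_hausdorffDist_general
    (C : Set (Lp ℝ 1 μ01))
    (hbdd : Bornology.IsBounded C) (hdiam : 0 < Metric.diam C)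
    (hext : ∀ ε > (0 : ℝ), ∃ x₀ : Lp ℝ 1 μ01, ∃ z : ℕ → Lp ℝ 1 μ01,
      (∀ n, z n ∈ C) ∧
      TendstoInMeasure μ01 (fun n => (z n : ℝ → ℝ)) atTop (x₀ : ℝ → ℝ) ∧
      Metric.diam C / 2 - ε ≤ Metric.infDist x₀ C) :
    (∀ ε > (0 : ℝ), ∃ x : ℕ → Lp ℝ 1 μ01, ∃ x₀ : Lp ℝ 1 μ01,
      (∀ n, x n ∈ C) ∧
      TendstoInMeasure μ01 (fun n => (x n : ℝ → ℝ)) atTop (x₀ : ℝ → ℝ) ∧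
      Metric.diam C / 2 - ε ≤ limsup (fun n => ‖x n - x₀‖) atTop ∧
      ∀ c ∈ C, 2 * limsup (fun n => ‖x n - x₀‖) atTop - ε ≤
        limsup (fun n => ‖x n - c‖) atTop) ∧
    tCoef C = 2 := by
  have diametral : ∀ ε > (0 : ℝ), ∃ x : ℕ → Lp ℝ 1 μ01, ∃ x₀ : Lp ℝ 1 μ01,
      (∀ n, x n ∈ C) ∧
      TendstoInMeasure μ01 (fun n => (x n : ℝ → ℝ)) atTop (x₀ : ℝ → ℝ) ∧
      Metric.diam C / 2 - ε ≤ limsup (fun n => ‖x n - x₀‖) atTop ∧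
      ∀ c ∈ C, 2 * limsup (fun n => ‖x n - x₀‖) atTop - ε ≤
        limsup (fun n => ‖x n - c‖) atTop := fun ε hε => by
    obtain ⟨x₀, z, hzC, hz, hr⟩ := hext (ε / 2) (half_pos hε)
    obtain ⟨φ, hφ, hL, hc⟩ := L1.exists_subseq_almost_diametral hbdd hzC hz
    exact ⟨fun k => z (φ k), x₀, fun k => hzC _, hz.comp hφ.tendsto_atTop, by linarith,
      fun c hc' => by linarith [hc c hc']⟩
  refine ⟨diametral, IsLeast.csInf_eq ⟨⟨zero_le_two, fun x x₀ hx _ =>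
    asymptoticRadius_le_two_mul_limsup hbdd hx x₀⟩, ?_⟩⟩
  rintro l ⟨-, hl⟩
  refine two_le_of_forall_two_mul_sub_le_mul hdiam fun ε hε => ?_
  obtain ⟨x, x₀, hx, hxx₀, hL, hc⟩ := diametral ε hε
  refine ⟨_, hL, ?_⟩
  calc 2 * limsup (fun n => ‖x n - x₀‖) atTop - ε ≤ asymptoticRadius C x :=
        le_asymptoticRadius ⟨x 0, hx 0⟩ fun c hc' => by simpa only [norm_sub_rev c] using hc c hc'
    _ ≤ l * limsup (fun n => ‖x₀ - x n‖) atTop := hl x x₀ hx hxx₀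
    _ = l * limsup (fun n => ‖x n - x₀‖) atTop := by simp only [norm_sub_rev x₀]

/-- If the Hausdorff distance between `C` and its closure in measure attains the extremal
value `diam C / 2`, then there are sequences witnessing almost-diametral behaviour and
consequently `t(C) = 2`. -/
theorem tCoef_eq_two_of_extremal_hausdorffDist
    (C : Set (Lp ℝ 1 μ01)) (hclosed : IsClosed C) (hconv : Convex ℝ C)
    (hbdd : Bornology.IsBounded C) (hdiam : 0 < Metric.diam C)
    (hext : ∀ ε > (0 : ℝ), ∃ x₀ : Lp ℝ 1 μ01, ∃ z : ℕ → Lp ℝ 1 μ01,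
      (∀ n, z n ∈ C) ∧
      TendstoInMeasure μ01 (fun n => (z n : ℝ → ℝ)) atTop (x₀ : ℝ → ℝ) ∧
      Metric.diam C / 2 - ε ≤ Metric.infDist x₀ C) :
    (∀ ε > (0 : ℝ), ∃ x : ℕ → Lp ℝ 1 μ01, ∃ x₀ : Lp ℝ 1 μ01,
      (∀ n, x n ∈ C) ∧
      TendstoInMeasure μ01 (fun n => (x n : ℝ → ℝ)) atTop (x₀ : ℝ → ℝ) ∧
      Metric.diam C / 2 - ε ≤ limsup (fun n => ‖x n - x₀‖) atTop ∧
      ∀ c ∈ C, 2 * limsup (fun n => ‖x n - x₀‖) atTop - ε ≤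
        limsup (fun n => ‖x n - c‖) atTop) ∧
    tCoef C = 2 :=
  tCoef_eq_two_of_extremal_hausdorffDist_general C hbdd hdiam hext
end

section
/- Let μ be a finite measure, let (f_n) be a sequence in L¹(μ) converging to 0 μ-almost everywhere, and let g ∈ L¹(μ). Then lim_n ( ‖f_n + g‖₁ − ‖f_n‖₁ ) = ‖g‖₁. In particular, limsup_n ‖f_n + g‖₁ = limsup_n ‖f_n‖₁ + ‖g‖₁ whenever (f_n) is bounded in L¹(μ). -/
open MeasureTheory Filter Topology

/-! The reverse triangle inequality `|‖a + b‖ - ‖a‖| ≤ ‖b‖` makes `‖g‖` a dominating function for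
`‖f n + g‖ - ‖f n‖`, which tends to `‖g‖` pointwise almost everywhere; dominated convergence gives
the limit of the `L¹` norms. The limsup identity follows because a convergent summand can be
pulled out of a limsup of a bounded sequence. -/

theorem limsup_add_eq_of_tendsto {ι : Type*} {l : Filter ι} [l.NeBot] {u v : ι → ℝ} {c : ℝ}
    (hu_le : IsBoundedUnder (· ≤ ·) l u) (hu_ge : IsBoundedUnder (· ≥ ·) l u)
    (hv : Tendsto v l (𝓝 c)) :
    limsup (u + v) l = limsup u l + c := by
  apply le_antisymm
  · calc limsup (u + v) l ≤ limsup u l + limsup v l :=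
          limsup_add_le hu_ge hu_le hv.isBoundedUnder_ge.isCoboundedUnder_le hv.isBoundedUnder_le
      _ = limsup u l + c := by rw [hv.limsup_eq]
  · calc limsup u l + c = limsup u l + liminf v l := by rw [hv.liminf_eq]
      _ ≤ limsup (u + v) l :=
          le_limsup_add hu_le hu_ge.isCoboundedUnder_le hv.isBoundedUnder_le hv.isBoundedUnder_ge

section

variable {α E : Type*} [MeasurableSpace α] {μ : Measure α} [NormedAddCommGroup E]

theorem tendsto_integral_norm_add_sub_norm_of_ae_tendsto_zero {ι : Type*} {l : Filter ι}
    [l.IsCountablyGenerated] {f : ι → α → E} {g : α → E}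
    (hf : ∀ i, AEStronglyMeasurable (f i) μ) (hg : Integrable g μ)
    (hae : ∀ᵐ ω ∂μ, Tendsto (fun i => f i ω) l (𝓝 0)) :
    Tendsto (fun i => ∫ ω, (‖f i ω + g ω‖ - ‖f i ω‖) ∂μ) l (𝓝 (∫ ω, ‖g ω‖ ∂μ)) := by
  refine tendsto_integral_filter_of_dominated_convergence (fun ω => ‖g ω‖)
    (Eventually.of_forall fun i =>
      ((hf i).add hg.aestronglyMeasurable).norm.sub (hf i).norm)
    (Eventually.of_forall fun i => Eventually.of_forall fun ω => ?_) hg.norm ?_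
  · simpa using abs_norm_sub_norm_le (f i ω + g ω) (f i ω)
  · filter_upwards [hae] with ω hω
    simpa using ((hω.add_const (g ω)).norm).sub hω.norm

theorem Lp.tendsto_norm_add_sub_norm_of_ae_tendsto_zero {ι : Type*} {l : Filter ι}
    [l.IsCountablyGenerated] {f : ι → Lp E 1 μ} (g : Lp E 1 μ)
    (hae : ∀ᵐ ω ∂μ, Tendsto (fun i => f i ω) l (𝓝 0)) :
    Tendsto (fun i => ‖f i + g‖ - ‖f i‖) l (𝓝 ‖g‖) := by
  have hnorm : ∀ i, ‖f i + g‖ - ‖f i‖ = ∫ ω, (‖f i ω + g ω‖ - ‖f i ω‖) ∂μ := fun i => by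
    rw [L1.norm_eq_integral_norm, L1.norm_eq_integral_norm,
      ← integral_sub (L1.integrable_coeFn _).norm (L1.integrable_coeFn _).norm]
    exact integral_congr_ae <| by
      filter_upwards [Lp.coeFn_add (f i) g] with ω hω
      rw [hω, Pi.add_apply]
  simp only [hnorm, L1.norm_eq_integral_norm g]
  exact tendsto_integral_norm_add_sub_norm_of_ae_tendsto_zero
    (fun i => Lp.aestronglyMeasurable (f i)) (L1.integrable_coeFn g) hae

end

/-- If `μ` is a finite measure, `(f n) ⊆ L¹(μ)` converges to `0` almost everywhere and
`g ∈ L¹(μ)`, then `‖f n + g‖₁ - ‖f n‖₁ → ‖g‖₁`; in particular, if `(f n)` is bounded then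
`limsup ‖f n + g‖₁ = limsup ‖f n‖₁ + ‖g‖₁`. -/
theorem tendsto_norm_add_sub_norm_of_ae_tendsto_zero
    {Ω : Type*} [MeasurableSpace Ω] (μ : Measure Ω)
    (f : ℕ → Lp ℝ 1 μ) (g : Lp ℝ 1 μ)
    (hae : ∀ᵐ ω ∂μ, Tendsto (fun n => (f n : Ω → ℝ) ω) atTop (𝓝 0)) :
    Tendsto (fun n => ‖f n + g‖ - ‖f n‖) atTop (𝓝 ‖g‖) ∧
    ((∃ M : ℝ, ∀ n, ‖f n‖ ≤ M) →
      limsup (fun n => ‖f n + g‖) atTop = limsup (fun n => ‖f n‖) atTop + ‖g‖) := by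
  have hlim := Lp.tendsto_norm_add_sub_norm_of_ae_tendsto_zero g hae
  refine ⟨hlim, fun ⟨M, hM⟩ => ?_⟩
  have hsplit : (fun n => ‖f n + g‖) = (fun n => ‖f n‖) + fun n => ‖f n + g‖ - ‖f n‖ := by
    funext n
    simp
  rw [hsplit]
  exact limsup_add_eq_of_tendsto (isBoundedUnder_of ⟨M, hM⟩)
    (isBoundedUnder_of ⟨0, fun n => norm_nonneg _⟩) hlim
end

section
/- Let μ be a finite measure. L¹(μ) satisfies the uniform Opial condition with respect to μ-almost everywhere convergence, with Opial modulus r(c) = c: if (f_n) is a bounded sequence in L¹(μ) converging to 0 μ-almost everywhere with liminf_n ‖f_n‖₁ ≥ 1, and x ∈ L¹(μ) satisfies ‖x‖₁ ≥ c for some c ≥ 0, then liminf_n ‖f_n − x‖₁ ≥ 1 + c. -/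
/-!
Pointwise, `‖f ω - x ω‖ - ‖f ω‖` is dominated by `‖x ω‖` and tends to `‖x ω‖` wherever `f → 0`,
so by dominated convergence `‖fₙ - x‖₁ = ‖fₙ‖₁ + ‖x‖₁ + o(1)`. Taking `liminf` gives the bound.
-/

open MeasureTheory Filter Topology

section

variable {Ω E : Type*} [MeasurableSpace Ω] {μ : Measure Ω} [NormedAddCommGroup E]

theorem tendsto_integral_norm_sub_sub_norm {ι : Type*} {l : Filter ι} [l.IsCountablyGenerated]
    {g : ι → Ω → E} {x : Ω → E} (hg : ∀ i, AEStronglyMeasurable (g i) μ) (hx : Integrable x μ)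
    (hlim : ∀ᵐ ω ∂μ, Tendsto (fun i => g i ω) l (𝓝 0)) :
    Tendsto (fun i => ∫ ω, (‖g i ω - x ω‖ - ‖g i ω‖) ∂μ) l (𝓝 (∫ ω, ‖x ω‖ ∂μ)) := by
  refine tendsto_integral_filter_of_dominated_convergence (fun ω => ‖x ω‖)
    (.of_forall fun i => ((hg i).sub hx.1).norm.sub (hg i).norm) (.of_forall fun i => ?_)
    hx.norm ?_
  · filter_upwards with ω
    simpa using abs_norm_sub_norm_le (g i ω - x ω) (g i ω)
  · filter_upwards [hlim] with ω hω
    simpa using (hω.sub_const (x ω)).norm.sub hω.norm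

namespace MeasureTheory.L1

theorem norm_sub_sub_norm_eq_integral (f x : Lp E 1 μ) :
    ‖f - x‖ - ‖f‖ = ∫ ω, (‖f ω - x ω‖ - ‖f ω‖) ∂μ := by
  rw [norm_eq_integral_norm, norm_eq_integral_norm,
    ← MeasureTheory.integral_sub (integrable_coeFn (f - x)).norm (integrable_coeFn f).norm]
  refine integral_congr_ae ?_
  filter_upwards [Lp.coeFn_sub f x] with ω hω
  simp only [hω, Pi.sub_apply]

theorem tendsto_norm_sub_sub_norm {ι : Type*} {l : Filter ι} [l.IsCountablyGenerated]
    (f : ι → Lp E 1 μ) (x : Lp E 1 μ) (hae : ∀ᵐ ω ∂μ, Tendsto (fun i => f i ω) l (𝓝 0)) :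
    Tendsto (fun i => ‖f i - x‖ - ‖f i‖) l (𝓝 ‖x‖) := by
  simp_rw [norm_sub_sub_norm_eq_integral, norm_eq_integral_norm x]
  exact tendsto_integral_norm_sub_sub_norm (fun i => Lp.aestronglyMeasurable (f i))
    (integrable_coeFn x) hae

end MeasureTheory.L1

end

theorem uniform_opial_L1_general
    {Ω : Type*} [MeasurableSpace Ω] (μ : Measure Ω)
    (f : ℕ → Lp ℝ 1 μ) (hbdd : ∃ M : ℝ, ∀ n, ‖f n‖ ≤ M)
    (hae : ∀ᵐ ω ∂μ, Tendsto (fun n => (f n : Ω → ℝ) ω) atTop (𝓝 0))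
    (hnorm : 1 ≤ liminf (fun n => ‖f n‖) atTop)
    (c : ℝ) (x : Lp ℝ 1 μ) (hx : c ≤ ‖x‖) :
    1 + c ≤ liminf (fun n => ‖f n - x‖) atTop := by
  obtain ⟨M, hM⟩ := hbdd
  have hsplit := L1.tendsto_norm_sub_sub_norm f x hae
  calc 1 + c ≤ liminf (fun n => ‖f n‖) atTop + ‖x‖ := add_le_add hnorm hx
    _ = liminf (fun n => ‖f n‖) atTop + liminf (fun n => ‖f n - x‖ - ‖f n‖) atTop := by
      rw [hsplit.liminf_eq]
    _ ≤ liminf ((fun n => ‖f n‖) + fun n => ‖f n - x‖ - ‖f n‖) atTop :=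
      le_liminf_add (isBoundedUnder_of ⟨0, fun n => norm_nonneg _⟩) (isBoundedUnder_of ⟨M, hM⟩)
        hsplit.isBoundedUnder_ge hsplit.isBoundedUnder_le.isCoboundedUnder_ge
    _ = liminf (fun n => ‖f n - x‖) atTop := by simp only [Pi.add_def, add_sub_cancel]

/-- For a finite measure `μ`, `L¹(μ)` satisfies the uniform Opial condition with respect to
almost everywhere convergence, with Opial modulus `r(c) = c`. -/
theorem uniform_opial_L1
    {Ω : Type*} [MeasurableSpace Ω] (μ : Measure Ω) [IsFiniteMeasure μ]
    (f : ℕ → Lp ℝ 1 μ) (hbdd : ∃ M : ℝ, ∀ n, ‖f n‖ ≤ M)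
    (hae : ∀ᵐ ω ∂μ, Tendsto (fun n => (f n : Ω → ℝ) ω) atTop (𝓝 0))
    (hnorm : 1 ≤ liminf (fun n => ‖f n‖) atTop)
    (c : ℝ) (hc : 0 ≤ c) (x : Lp ℝ 1 μ) (hx : c ≤ ‖x‖) :
    1 + c ≤ liminf (fun n => ‖f n - x‖) atTop :=
  uniform_opial_L1_general μ f hbdd hae hnorm c x hx
end

section
/- Let X be a normed space, let C ⊆ X be a convex set, let T : C → C be an affine map, and let (x_n) ⊆ C be an approximate fixed point sequence for T. Then the sequence of arithmetic means z_p := (x₁ + x₂ + ⋯ + x_p)/p is also an approximate fixed point sequence for T, i.e., lim_p ‖z_p − T z_p‖ = 0. -/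
/-!
Affinity along segments of a convex set extends, by induction on the number of points, to all
finite convex combinations; so `T` commutes with taking means of points of `C`, and
`z_p - T z_p` is the mean of the `x_i - T x_i`, which tends to `0` by Cesàro.
-/

open Filter Topology Finset

def IsAffineOn {X : Type*} [AddCommGroup X] [Module ℝ X] (C : Set X) (T : X → X) : Prop :=
  ∀ x ∈ C, ∀ y ∈ C, ∀ l : ℝ, 0 ≤ l → l ≤ 1 → T (l • x + (1 - l) • y) = l • T x + (1 - l) • T y

namespace IsAffineOn

variable {X ι : Type*} [AddCommGroup X] [Module ℝ X] {C : Set X} {T : X → X}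

theorem map_centerMass (hC : Convex ℝ C) (hT : IsAffineOn C T) {s : Finset ι} (hs : s.Nonempty)
    {w : ι → ℝ} (hw : ∀ i ∈ s, 0 < w i) {p : ι → X} (hp : ∀ i ∈ s, p i ∈ C) :
    T (s.centerMass w p) = s.centerMass w (fun i => T (p i)) := by
  classical
  induction hs using Finset.Nonempty.cons_induction with
  | singleton a =>
    have ha : w a ≠ 0 := (hw a (mem_singleton_self a)).ne'
    rw [centerMass_singleton _ _ ha, centerMass_singleton _ _ ha]
  | cons a t ha ht ih =>
    simp only [cons_eq_insert, mem_insert, forall_eq_or_imp] at hw hp ⊢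
    have hwt : 0 < ∑ j ∈ t, w j := sum_pos (fun j hj => hw.2 j hj) ht
    have hW : 0 < w a + ∑ j ∈ t, w j := add_pos hw.1 hwt
    have hcompl : (∑ j ∈ t, w j) / (w a + ∑ j ∈ t, w j) = 1 - w a / (w a + ∑ j ∈ t, w j) := by
      field_simp; ring
    have hmem : t.centerMass w p ∈ C :=
      hC.centerMass_mem (fun j hj => (hw.2 j hj).le) hwt hp.2
    rw [centerMass_insert _ _ _ ha hwt.ne', centerMass_insert _ _ _ ha hwt.ne', hcompl,
      hT _ hp.1 _ hmem _ (div_nonneg hw.1.le hW.le) ((div_le_one hW).2 (by linarith)),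
      ih hw.2 hp.2]

theorem map_average (hC : Convex ℝ C) (hT : IsAffineOn C T) {s : Finset ι} (hs : s.Nonempty)
    {p : ι → X} (hp : ∀ i ∈ s, p i ∈ C) :
    T ((#s : ℝ)⁻¹ • ∑ i ∈ s, p i) = (#s : ℝ)⁻¹ • ∑ i ∈ s, T (p i) := by
  simpa [centerMass] using hT.map_centerMass hC hs (w := fun _ => 1) (fun _ _ => one_pos) hp

end IsAffineOn

theorem Filter.Tendsto.cesaro_smul_Icc {E : Type*} [NormedAddCommGroup E] [NormedSpace ℝ E]
    {u : ℕ → E} {l : E} (h : Tendsto u atTop (𝓝 l)) :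
    Tendsto (fun n : ℕ => (n⁻¹ : ℝ) • ∑ i ∈ Icc 1 n, u i) atTop (𝓝 l) := by
  convert (h.comp (tendsto_add_atTop_nat 1)).cesaro_smul using 3 with n
  rw [← Ico_add_one_right_eq_Icc, sum_Ico_eq_sum_range]
  simp [add_comm]

theorem means_of_afps_is_afps_of_affine_general {X : Type*} [NormedAddCommGroup X] [NormedSpace ℝ X]
    (C : Set X) (hconv : Convex ℝ C)
    (T : X → X)
    (haff : ∀ x ∈ C, ∀ y ∈ C, ∀ l : ℝ, 0 ≤ l → l ≤ 1 →
      T (l • x + (1 - l) • y) = l • T x + (1 - l) • T y)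
    (x : ℕ → X) (hxC : ∀ n, x n ∈ C)
    (hafps : Tendsto (fun n => ‖x n - T (x n)‖) atTop (𝓝 0)) :
    Tendsto (fun p : ℕ => ‖((p : ℝ)⁻¹ • ∑ i ∈ Finset.Icc 1 p, x i) -
      T ((p : ℝ)⁻¹ • ∑ i ∈ Finset.Icc 1 p, x i)‖) atTop (𝓝 0) := by
  have hmeans : Tendsto (fun p : ℕ => (p⁻¹ : ℝ) • ∑ i ∈ Icc 1 p, (x i - T (x i))) atTop (𝓝 0) :=
    (tendsto_zero_iff_norm_tendsto_zero.2 hafps).cesaro_smul_Icc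
  refine norm_zero (E := X) ▸ (hmeans.congr' ?_).norm
  filter_upwards [eventually_ge_atTop 1] with p hp
  have hcard : (#(Icc 1 p) : ℝ) = p := by simp
  rw [← hcard, IsAffineOn.map_average hconv haff (nonempty_Icc.2 hp) (fun i _ => hxC i),
    sum_sub_distrib, smul_sub]

/-- If `T` is an affine self-map of a convex set `C` and `(x n)` is an approximate fixed point
sequence for `T`, then the arithmetic means `z_p = (x₁ + ⋯ + x_p)/p` also form an approximate
fixed point sequence. -/
theorem means_of_afps_is_afps_of_affine {X : Type*} [NormedAddCommGroup X] [NormedSpace ℝ X]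
    (C : Set X) (hconv : Convex ℝ C)
    (T : X → X) (hmaps : Set.MapsTo T C C)
    (haff : ∀ x ∈ C, ∀ y ∈ C, ∀ l : ℝ, 0 ≤ l → l ≤ 1 →
      T (l • x + (1 - l) • y) = l • T x + (1 - l) • T y)
    (x : ℕ → X) (hxC : ∀ n, x n ∈ C)
    (hafps : Tendsto (fun n => ‖x n - T (x n)‖) atTop (𝓝 0)) :
    Tendsto (fun p : ℕ => ‖((p : ℝ)⁻¹ • ∑ i ∈ Finset.Icc 1 p, x i) -
      T ((p : ℝ)⁻¹ • ∑ i ∈ Finset.Icc 1 p, x i)‖) atTop (𝓝 0) :=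
  means_of_afps_is_afps_of_affine_general C hconv T haff x hxC hafps
end
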